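/- Let N be a positive integer, t_min < t_max, and v in the convex hull of C_N over [t_min, t_max]. Among all representations of v as a convex combination of points on the curve using at most (N+1)/2 points (at most (N+2)/2 with first point t_min when N is even), there exists exactly one that is non-reducible, i.e., one in which, apart from the possible anchor term at t_min when N is even, no coefficient vanishes and no two terms share a parameter. -/

import Mathlib

open Polynomial Finset

section MomentCurveAux

lemma sign_const {a b : ℝ} {q : Polynomial ℝ} (hq : ∀ x ∈ Set.Icc a b, q.eval x ≠ 0) :
    ∃ σ : ℝ, (σ = 1 ∨ σ = -1) ∧ ∀ x ∈ Set.Icc a b, 0 < σ * q.eval x := by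
  by_cases hab : a ≤ b
  · have ha : a ∈ Set.Icc a b := ⟨le_refl _, hab⟩
    have hqa := hq a ha
    rcases lt_or_gt_of_ne hqa with hneg | hpos
    · refine ⟨-1, Or.inr rfl, fun x hx => ?_⟩
      rcases lt_trichotomy (q.eval x) 0 with h1 | h1 | h1
      · nlinarith
      · exact absurd h1 (hq x hx)
      · exfalso
        have hcont : ContinuousOn (fun y => q.eval y) (Set.uIcc a x) :=
          (Polynomial.continuous q).continuousOn
        have h0 : (0:ℝ) ∈ Set.uIcc (q.eval a) (q.eval x) :=
          Set.mem_uIcc.2 (Or.inl ⟨le_of_lt hneg, le_of_lt h1⟩)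
        obtain ⟨c, hc, hc0⟩ := intermediate_value_uIcc hcont h0
        have : c ∈ Set.Icc a b := by
          rcases Set.mem_uIcc.1 hc with ⟨h1', h2'⟩ | ⟨h1', h2'⟩
          · exact ⟨h1', le_trans h2' hx.2⟩
          · exact ⟨le_trans hx.1 h1', le_trans h2' hab⟩
        exact hq c this hc0
    · refine ⟨1, Or.inl rfl, fun x hx => ?_⟩
      rcases lt_trichotomy (q.eval x) 0 with h1 | h1 | h1
      · exfalso
        have hcont : ContinuousOn (fun y => q.eval y) (Set.uIcc a x) :=
          (Polynomial.continuous q).continuousOn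
        have h0 : (0:ℝ) ∈ Set.uIcc (q.eval a) (q.eval x) :=
          Set.mem_uIcc.2 (Or.inr ⟨le_of_lt h1, le_of_lt hpos⟩)
        obtain ⟨c, hc, hc0⟩ := intermediate_value_uIcc hcont h0
        have : c ∈ Set.Icc a b := by
          rcases Set.mem_uIcc.1 hc with ⟨h1', h2'⟩ | ⟨h1', h2'⟩
          · exact ⟨h1', le_trans h2' hx.2⟩
          · exact ⟨le_trans hx.1 h1', le_trans h2' hab⟩
        exact hq c this hc0
      · exact absurd h1 (hq x hx)
      · nlinarith
  · exact ⟨1, Or.inl rfl, fun x hx => absurd (hx.1.trans hx.2) hab⟩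

lemma even_rootMult {p : Polynomial ℝ} (hp : p ≠ 0) {a b r : ℝ} (hr : r ∈ Set.Ioo a b)
    (h0 : p.eval r = 0) (hpos : ∀ x ∈ Set.Icc a b, 0 ≤ p.eval x) :
    Even (p.rootMultiplicity r) := by
  by_contra hodd
  rw [Nat.not_even_iff_odd] at hodd
  obtain ⟨m, hm⟩ : ∃ m, m = p.rootMultiplicity r := ⟨_, rfl⟩
  rw [← hm] at hodd
  obtain ⟨u, hu⟩ : ∃ u, u = p /ₘ (X - C r) ^ m := ⟨_, rfl⟩
  have hfact : (X - C r) ^ m * u = p := by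
    rw [hu, hm]; exact pow_mul_divByMonic_rootMultiplicity_eq p r
  have hur : u.eval r ≠ 0 := by
    rw [hu, hm]; exact eval_divByMonic_pow_rootMultiplicity_ne_zero r hp
  have hcont : ContinuousAt (fun x => u.eval x) r := (Polynomial.continuous u).continuousAt
  have hev : ∀ᶠ x in nhds r, u.eval x ≠ 0 ∧ x ∈ Set.Ioo a b := by
    filter_upwards [hcont.eventually_ne hur, Ioo_mem_nhds hr.1 hr.2] with x h1 h2
    exact ⟨h1, h2⟩
  obtain ⟨δ, hδ, hball⟩ := Metric.eventually_nhds_iff.1 hev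
  have habs : |δ| = δ := abs_of_pos hδ
  have key : ∀ x : ℝ, dist x r < δ → p.eval x = (x - r) ^ m * u.eval x := by
    intro x _
    rw [← hfact]; simp
  rcases lt_or_gt_of_ne hur with hneg | hposu
  · -- u r < 0 : take x := r + δ/2
    have hxb : dist (r + δ/2) r < δ := by
      rw [Real.dist_eq]; rw [abs_of_pos (by linarith : (0:ℝ) < r + δ/2 - r)]; linarith
    obtain ⟨hux, hxab⟩ := hball hxb
    have hux' : u.eval (r + δ/2) < 0 := by
      rcases lt_or_gt_of_ne hux with h | h
      · exact h
      · exfalso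
        have hcont' : ContinuousOn (fun y => u.eval y) (Set.Icc r (r + δ/2)) :=
          (Polynomial.continuous u).continuousOn
        obtain ⟨c, hc, hc0⟩ := intermediate_value_Icc (by linarith : r ≤ r + δ/2) hcont'
          (⟨le_of_lt hneg, le_of_lt h⟩ : (0:ℝ) ∈ Set.Icc (u.eval r) (u.eval (r + δ/2)))
        have : dist c r < δ := by
          rw [Real.dist_eq, abs_of_nonneg (by linarith [hc.1] : (0:ℝ) ≤ c - r)]
          linarith [hc.2]
        exact (hball this).1 hc0
    have hpx : p.eval (r + δ/2) < 0 := by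
      rw [key _ hxb]
      have h1 : (0:ℝ) < (r + δ/2 - r) ^ m := pow_pos (by linarith) m
      nlinarith
    exact absurd (hpos _ ⟨le_of_lt hxab.1, le_of_lt hxab.2⟩) (not_le.2 hpx)
  · -- u r > 0 : take x := r - δ/2
    have hxb : dist (r - δ/2) r < δ := by
      rw [Real.dist_eq, abs_of_neg (by linarith : r - δ/2 - r < 0)]; linarith
    obtain ⟨hux, hxab⟩ := hball hxb
    have hux' : 0 < u.eval (r - δ/2) := by
      rcases lt_or_gt_of_ne hux with h | h
      · exfalso
        have hcont' : ContinuousOn (fun y => u.eval y) (Set.Icc (r - δ/2) r) :=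
          (Polynomial.continuous u).continuousOn
        obtain ⟨c, hc, hc0⟩ := intermediate_value_Icc (by linarith : r - δ/2 ≤ r) hcont'
          (⟨le_of_lt h, le_of_lt hposu⟩ : (0:ℝ) ∈ Set.Icc (u.eval (r - δ/2)) (u.eval r))
        have : dist c r < δ := by
          rw [Real.dist_eq, abs_of_nonpos (by linarith [hc.2] : c - r ≤ 0)]
          linarith [hc.1]
        exact (hball this).1 hc0
      · exact h
    have hpx : p.eval (r - δ/2) < 0 := by
      rw [key _ hxb]
      have h1 : (r - δ/2 - r) ^ m < 0 := Odd.pow_neg hodd (by linarith)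
      nlinarith
    exact absurd (hpos _ ⟨le_of_lt hxab.1, le_of_lt hxab.2⟩) (not_le.2 hpx)

lemma mult_sum_le {p : Polynomial ℝ} (hp : p ≠ 0) (T : Finset ℝ)
    (hT : ∀ x ∈ T, p.eval x = 0) : ∑ x ∈ T, p.rootMultiplicity x ≤ p.natDegree := by
  classical
  have hsub : T ⊆ p.roots.toFinset := by
    intro x hx
    rw [Multiset.mem_toFinset, mem_roots hp]
    exact hT x hx
  calc ∑ x ∈ T, p.rootMultiplicity x ≤ ∑ x ∈ p.roots.toFinset, p.rootMultiplicity x :=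
        Finset.sum_le_sum_of_subset hsub
    _ = ∑ x ∈ p.roots.toFinset, p.roots.count x := by
        refine Finset.sum_congr rfl fun x _ => ?_; rw [count_roots]
    _ = Multiset.card p.roots := Multiset.toFinset_sum_count_eq _
    _ ≤ p.natDegree := p.card_roots'

lemma exists_sign_of_even_mult {p : Polynomial ℝ} (hp : p ≠ 0) {a b : ℝ}
    (h : ∀ r ∈ Set.Icc a b, Even (p.rootMultiplicity r)) :
    ∃ σ : ℝ, (σ = 1 ∨ σ = -1) ∧ ∀ x ∈ Set.Icc a b, 0 ≤ σ * p.eval x := by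
  classical
  obtain ⟨q, hq⟩ := p.prod_multiset_X_sub_C_dvd
  have hq0 : q ≠ 0 := by
    rintro rfl; rw [mul_zero] at hq; exact hp hq
  have hqroots : q.roots = 0 := by
    have h2 := roots_mul (hq ▸ hp)
    rw [← hq, roots_multiset_prod_X_sub_C] at h2
    exact (left_eq_add.mp h2)
  have hqne : ∀ x : ℝ, q.eval x ≠ 0 := by
    intro x hx
    have : x ∈ q.roots := by rw [mem_roots hq0]; exact hx
    rw [hqroots] at this; exact absurd this (Multiset.notMem_zero x)
  -- split root finset
  let R := p.roots.toFinset
  let Rin := R.filter (fun r => r ∈ Set.Icc a b)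
  let Rout := R.filter (fun r => r ∉ Set.Icc a b)
  -- g = outside-part * q : nonvanishing on [a,b]
  let g : Polynomial ℝ := (∏ r ∈ Rout, (X - C r) ^ p.rootMultiplicity r) * q
  have hgne : ∀ x ∈ Set.Icc a b, g.eval x ≠ 0 := by
    intro x hx
    simp only [g, eval_mul, eval_prod, eval_pow, eval_sub, eval_X, eval_C]
    apply mul_ne_zero
    · apply Finset.prod_ne_zero_iff.mpr
      intro r hrr
      have hr : r ∉ Set.Icc a b := (Finset.mem_filter.mp hrr).2
      exact pow_ne_zero _ (sub_ne_zero.mpr (fun hxr => hr (hxr ▸ hx)))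
    · exact hqne x
  obtain ⟨σ, hσ, hσpos⟩ := sign_const hgne
  refine ⟨σ, hσ, fun x hx => ?_⟩
  -- p.eval x = (∏ Rin (x-r)^m) * g.eval x
  have hpeval : p.eval x = (∏ r ∈ Rin, (x - r) ^ p.rootMultiplicity r) * g.eval x := by
    have hprodeval : Multiset.prod (p.roots.map fun r => (x - r)) =
        ∏ r ∈ R, (x - r) ^ p.roots.count r := by
      rw [Finset.prod_multiset_map_count]
    have : p.eval x = (∏ r ∈ R, (x - r) ^ p.roots.count r) * q.eval x := by
      conv_lhs => rw [hq]
      rw [eval_mul, eval_multiset_prod]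
      congr 1
      rw [← hprodeval, Multiset.map_map]
      congr 1
      ext r
      simp
    rw [this]
    have hsplit : (∏ r ∈ R, (x - r) ^ p.roots.count r) =
        (∏ r ∈ Rin, (x - r) ^ p.roots.count r) * (∏ r ∈ Rout, (x - r) ^ p.roots.count r) :=
      (Finset.prod_filter_mul_prod_filter_not R _ _).symm
    rw [hsplit]
    simp only [g, eval_mul, eval_prod, eval_pow, eval_sub, eval_X, eval_C]
    have hc : ∀ r ∈ R, p.roots.count r = p.rootMultiplicity r := fun r _ => count_roots p
    rw [Finset.prod_congr rfl (fun r hr => by rw [hc r (Finset.mem_filter.mp hr).1]),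
      Finset.prod_congr (rfl : Rout = Rout) (fun r hr => by rw [hc r (Finset.mem_filter.mp hr).1])]
    ring
  rw [hpeval]
  have h1 : 0 ≤ ∏ r ∈ Rin, (x - r) ^ p.rootMultiplicity r := by
    apply Finset.prod_nonneg
    intro r hr
    exact (h r (Finset.mem_filter.mp hr).2).pow_nonneg _
  have h2 : 0 < σ * g.eval x := hσpos x hx
  nlinarith

lemma degree_coeffsum_lt (n : ℕ) (c : Fin n → ℝ) :
    (∑ j : Fin n, C (c j) * X ^ (j : ℕ)).degree < (n : WithBot ℕ) := by
  apply lt_of_le_of_lt (degree_sum_le _ _)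
  rw [Finset.sup_lt_iff (by exact_mod_cast bot_lt_iff_ne_bot.2 (by simp) : (⊥ : WithBot ℕ) < n)]
  intro j _
  exact lt_of_le_of_lt (degree_C_mul_X_pow_le _ _) (by exact_mod_cast j.isLt)

lemma coeffsum_eval (n : ℕ) (c : Fin n → ℝ) (x : ℝ) :
    (∑ j : Fin n, C (c j) * X ^ (j : ℕ)).eval x = ∑ j, c j * x ^ (j : ℕ) := by
  rw [eval_finset_sum]
  exact Finset.sum_congr rfl fun j _ => by simp

lemma coeffsum_coeff (n : ℕ) (c : Fin n → ℝ) (j : Fin n) :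
    (∑ i : Fin n, C (c i) * X ^ (i : ℕ)).coeff (j : ℕ) = c j := by
  rw [finset_sum_coeff]
  rw [Finset.sum_eq_single j]
  · simp
  · intro i _ hij
    rw [coeff_C_mul, coeff_X_pow, if_neg (by simpa [Fin.val_eq_val] using (Ne.symm hij)), mul_zero]
  · intro hj; exact absurd (Finset.mem_univ j) hj

/-- Existence of a monic polynomial of degree `n` orthogonal to all lower powers. -/
lemma exists_orthopoly (S : Finset ℝ) (w : ℝ → ℝ) (hw : ∀ x ∈ S, 0 < w x) (n : ℕ)
    (hcard : n ≤ S.card) :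
    ∃ p : Polynomial ℝ, p.Monic ∧ p.natDegree = n ∧
      ∀ k < n, ∑ x ∈ S, w x * p.eval x * x ^ k = 0 := by
  classical
  let L : (Fin n → ℝ) →ₗ[ℝ] (Fin n → ℝ) :=
    { toFun := fun c => fun k => ∑ x ∈ S, w x * (∑ j, c j * x ^ (j : ℕ)) * x ^ (k : ℕ)
      map_add' := by
        intro c d; funext k
        simp only [Pi.add_apply]
        rw [← Finset.sum_add_distrib]
        refine Finset.sum_congr rfl fun x _ => ?_
        rw [show (∑ j : Fin n, (c j + d j) * x ^ (j:ℕ))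
            = (∑ j : Fin n, c j * x ^ (j:ℕ)) + ∑ j : Fin n, d j * x ^ (j:ℕ) by
          rw [← Finset.sum_add_distrib]
          exact Finset.sum_congr rfl fun j _ => by ring]
        ring
      map_smul' := by
        intro m c; funext k
        simp only [RingHom.id_apply, Pi.smul_apply, smul_eq_mul]
        rw [Finset.mul_sum]
        refine Finset.sum_congr rfl fun x _ => ?_
        rw [show (∑ j, m * c j * x ^ (j:ℕ)) = m * ∑ j, c j * x ^ (j:ℕ) by
          rw [Finset.mul_sum]; exact Finset.sum_congr rfl fun j _ => by ring]
        ring }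
  have hL : ∀ (c : Fin n → ℝ) (k : Fin n),
      L c k = ∑ x ∈ S, w x * (∑ j, c j * x ^ (j : ℕ)) * x ^ (k : ℕ) := fun _ _ => rfl
  have hinj : Function.Injective L := by
    rw [← LinearMap.ker_eq_bot, LinearMap.ker_eq_bot']
    intro c hc
    let P : Polynomial ℝ := ∑ j : Fin n, C (c j) * X ^ (j : ℕ)
    have hPeval : ∀ x : ℝ, P.eval x = ∑ j, c j * x ^ (j : ℕ) := coeffsum_eval n c
    have swap : ∑ x ∈ S, w x * P.eval x * P.eval x = ∑ j, c j * L c j := by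
      have hterm : ∀ x ∈ S, w x * P.eval x * P.eval x
          = ∑ j, c j * (w x * P.eval x * x ^ (j : ℕ)) := by
        intro x _
        conv_lhs => rw [show w x * P.eval x * P.eval x
          = P.eval x * (w x * P.eval x) by ring]
        conv_lhs => rw [hPeval x]
        rw [Finset.sum_mul]
        refine Finset.sum_congr rfl fun j _ => ?_
        rw [hPeval]; ring
      rw [Finset.sum_congr rfl hterm, Finset.sum_comm]
      refine Finset.sum_congr rfl fun j _ => ?_
      rw [hL, Finset.mul_sum]
      refine Finset.sum_congr rfl fun x _ => ?_
      rw [hPeval]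
    have hzero : ∑ x ∈ S, w x * P.eval x * P.eval x = 0 := by
      rw [swap, hc]; simp
    have hvanish : ∀ x ∈ S, P.eval x = 0 := by
      have hnn : ∀ x ∈ S, 0 ≤ w x * P.eval x * P.eval x := by
        intro x hx
        have := hw x hx
        nlinarith [sq_nonneg (P.eval x)]
      intro x hx
      have h3 := (Finset.sum_eq_zero_iff_of_nonneg hnn).1 hzero x hx
      have hwx := hw x hx
      rw [mul_assoc] at h3
      exact mul_self_eq_zero.mp ((mul_eq_zero.mp h3).resolve_left hwx.ne')
    have hP0 : P = 0 := by
      by_contra hP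
      have hsub : S.val ⊆ P.roots := by
        intro x hx
        rw [mem_roots hP]
        exact hvanish x hx
      have h1 : S.card ≤ P.natDegree := card_le_degree_of_subset_roots hsub
      have h2 : P.natDegree < n :=
        (natDegree_lt_iff_degree_lt hP).2 (degree_coeffsum_lt n c)
      omega
    funext j
    have := coeffsum_coeff n c j
    rw [show (∑ i : Fin n, C (c i) * X ^ (i : ℕ)) = P from rfl, hP0] at this
    simpa using this.symm
  have hsurj : Function.Surjective L := LinearMap.injective_iff_surjective.mp hinj
  obtain ⟨c, hc⟩ := hsurj (fun k => -∑ x ∈ S, w x * x ^ (n + (k : ℕ)))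
  refine ⟨X ^ n + ∑ j : Fin n, C (c j) * X ^ (j : ℕ), ?_, ?_, ?_⟩
  · exact monic_X_pow_add (degree_coeffsum_lt n c)
  · have hdeg : (X ^ n + ∑ j : Fin n, C (c j) * X ^ (j : ℕ)).degree = (n : WithBot ℕ) := by
      rw [add_comm, degree_add_eq_right_of_degree_lt]
      · exact degree_X_pow n
      · rw [degree_X_pow]; exact degree_coeffsum_lt n c
    exact natDegree_eq_of_degree_eq_some hdeg
  · intro k hk
    have hsplit : ∀ x ∈ S, w x * (X ^ n + ∑ j : Fin n, C (c j) * X ^ (j : ℕ)).eval x * x ^ k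
        = w x * x ^ (n + k) + w x * (∑ j, c j * x ^ (j : ℕ)) * x ^ k := by
      intro x _
      rw [eval_add, eval_pow, eval_X, coeffsum_eval, pow_add]
      ring
    rw [Finset.sum_congr rfl hsplit, Finset.sum_add_distrib]
    have := congrFun hc ⟨k, hk⟩
    rw [hL] at this
    simp only at this
    rw [this]
    ring

lemma orthopoly_roots (S : Finset ℝ) (hS : S.Nonempty) (w : ℝ → ℝ)
    (hw : ∀ x ∈ S, 0 < w x) (n : ℕ) (hcard : n + 1 ≤ S.card)
    (p : Polynomial ℝ) (hmonic : p.Monic) (hdeg : p.natDegree = n)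
    (horth : ∀ k < n, ∑ x ∈ S, w x * p.eval x * x ^ k = 0) :
    ∃ R : Finset ℝ, R.card = n ∧ (∀ r ∈ R, r ∈ Set.Icc (S.min' hS) (S.max' hS)) ∧
      ∀ r ∈ R, p.eval r = 0 := by
  classical
  have hp0 : p ≠ 0 := hmonic.ne_zero
  obtain ⟨a, ha⟩ : ∃ a, a = S.min' hS := ⟨_, rfl⟩
  obtain ⟨b, hb⟩ : ∃ b, b = S.max' hS := ⟨_, rfl⟩
  have hSab : ∀ s ∈ S, s ∈ Set.Icc a b := fun s hs =>
    ⟨ha ▸ S.min'_le s hs, hb ▸ S.le_max' s hs⟩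
  obtain ⟨R, hR⟩ : ∃ R, R = p.roots.toFinset.filter
      (fun r => r ∈ Set.Icc a b ∧ Odd (p.rootMultiplicity r)) := ⟨_, rfl⟩
  have hRroot : ∀ r ∈ R, p.eval r = 0 := by
    intro r hr
    rw [hR] at hr
    have := (Finset.mem_filter.mp hr).1
    rw [Multiset.mem_toFinset, mem_roots hp0] at this
    exact this
  have hRmem : ∀ r ∈ R, r ∈ Set.Icc a b := fun r hr => ((Finset.mem_filter.mp (hR ▸ hr)).2).1
  have hRodd : ∀ r ∈ R, Odd (p.rootMultiplicity r) := fun r hr =>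
    ((Finset.mem_filter.mp (hR ▸ hr)).2).2
  have hkn : R.card ≤ n := by
    have h1 : ∀ r ∈ R, 1 ≤ p.rootMultiplicity r := by
      intro r hr
      exact (rootMultiplicity_pos hp0).2 (hRroot r hr)
    calc R.card = ∑ r ∈ R, 1 := by simp
      _ ≤ ∑ r ∈ R, p.rootMultiplicity r := Finset.sum_le_sum h1
      _ ≤ p.natDegree := mult_sum_le hp0 R hRroot
      _ = n := hdeg
  have hkeq : R.card = n := by
    by_contra hne
    have hklt : R.card < n := lt_of_le_of_ne hkn hne
    -- the auxiliary polynomial q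
    obtain ⟨q, hq⟩ : ∃ q : Polynomial ℝ, q = ∏ r ∈ R, (X - C r) := ⟨_, rfl⟩
    have hqmonic : q.Monic := hq ▸ monic_prod_of_monic _ _ fun r _ => monic_X_sub_C r
    have hq0 : q ≠ 0 := hqmonic.ne_zero
    have hqdeg : q.natDegree = R.card := by
      rw [hq, natDegree_prod _ _ fun r _ => X_sub_C_ne_zero r]
      simp
    have hpq0 : p * q ≠ 0 := mul_ne_zero hp0 hq0
    have hqmult : ∀ r : ℝ, q.rootMultiplicity r = if r ∈ R then 1 else 0 := by
      intro r
      rw [← count_roots, hq, roots_prod_X_sub_C]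
      by_cases hr : r ∈ R
      · rw [if_pos hr]
        exact Multiset.count_eq_one_of_mem R.nodup hr
      · rw [if_neg hr]
        exact Multiset.count_eq_zero_of_notMem hr
    -- all multiplicities of p*q in [a,b] are even
    have heven : ∀ r ∈ Set.Icc a b, Even ((p * q).rootMultiplicity r) := by
      intro r hrab
      rw [rootMultiplicity_mul hpq0, hqmult r]
      by_cases hodd : Odd (p.rootMultiplicity r)
      · have hroot : p.eval r = 0 := by
          have : 0 < p.rootMultiplicity r := hodd.pos
          exact (rootMultiplicity_pos hp0).1 this
        have hrR : r ∈ R := by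
          rw [hR, Finset.mem_filter, Multiset.mem_toFinset, mem_roots hp0]
          exact ⟨hroot, hrab, hodd⟩
        rw [if_pos hrR]
        exact hodd.add_one
      · have hrR : r ∉ R := fun hrR => hodd (hRodd r hrR)
        rw [if_neg hrR, add_zero]
        exact Nat.not_odd_iff_even.mp hodd
    obtain ⟨σ, hσpm, hσ⟩ := exists_sign_of_even_mult hpq0 heven
    have hσne : σ ≠ 0 := by rcases hσpm with h | h <;> rw [h] <;> norm_num
    -- orthogonality of p against q
    have hsum : ∑ x ∈ S, w x * p.eval x * q.eval x = 0 := by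
      have hqev : ∀ x : ℝ, q.eval x = ∑ j ∈ Finset.range (R.card + 1), q.coeff j * x ^ j := by
        intro x
        exact eval_eq_sum_range' (by omega : q.natDegree < R.card + 1) x
      have : ∀ x ∈ S, w x * p.eval x * q.eval x
          = ∑ j ∈ Finset.range (R.card + 1), q.coeff j * (w x * p.eval x * x ^ j) := by
        intro x _
        rw [hqev x, Finset.mul_sum]
        exact Finset.sum_congr rfl fun j _ => by ring
      rw [Finset.sum_congr rfl this, Finset.sum_comm]
      apply Finset.sum_eq_zero
      intro j hj
      rw [← Finset.mul_sum, horth j (by rw [Finset.mem_range] at hj; omega), mul_zero]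
    -- each term vanishes
    have hvanish : ∀ x ∈ S, (p * q).eval x = 0 := by
      have hnn : ∀ x ∈ S, 0 ≤ σ * (w x * p.eval x * q.eval x) := by
        intro x hx
        have h1 := hσ x (hSab x hx)
        rw [eval_mul] at h1
        have h2 := (hw x hx).le
        rw [show σ * (w x * p.eval x * q.eval x) = w x * (σ * (p.eval x * q.eval x)) by ring]
        exact mul_nonneg h2 h1
      have hz : ∑ x ∈ S, σ * (w x * p.eval x * q.eval x) = 0 := by
        rw [← Finset.mul_sum, hsum, mul_zero]
      intro x hx
      have h3 := (Finset.sum_eq_zero_iff_of_nonneg hnn).1 hz x hx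
      rw [eval_mul]
      have hwx := hw x hx
      have : p.eval x * q.eval x = 0 := by
        by_contra hne'
        rcases mul_eq_zero.mp (by
          have : σ * (w x * (p.eval x * q.eval x)) = 0 := by rw [← h3]; ring
          exact this) with h | h
        · exact hσne h
        · rcases mul_eq_zero.mp h with h' | h'
          · exact absurd h' hwx.ne'
          · exact hne' h'
      exact this
    -- multiplicity count
    have hmul2 : ∀ s ∈ S, s ≠ a → s ≠ b → 2 ≤ (p * q).rootMultiplicity s := by
      intro s hs hsa hsb
      have hsIoo : s ∈ Set.Ioo a b := by
        rcases hSab s hs with ⟨h1, h2⟩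
        exact ⟨lt_of_le_of_ne h1 (Ne.symm hsa), lt_of_le_of_ne h2 hsb⟩
      -- apply even_rootMult to C σ * (p*q)
      have hcne : C σ * (p * q) ≠ 0 := mul_ne_zero (by simpa using hσne) hpq0
      have hev2 : Even ((C σ * (p * q)).rootMultiplicity s) := by
        apply even_rootMult hcne hsIoo
        · rw [eval_mul, eval_C, hvanish s hs, mul_zero]
        · intro x hx
          rw [eval_mul, eval_C]
          exact hσ x hx
      have hmeq : (C σ * (p * q)).rootMultiplicity s = (p * q).rootMultiplicity s := by
        rw [rootMultiplicity_mul hcne, rootMultiplicity_C, zero_add]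
      rw [hmeq] at hev2
      have hpos : 1 ≤ (p * q).rootMultiplicity s := by
        apply (rootMultiplicity_pos hpq0).2
        exact hvanish s hs
      rcases hev2 with ⟨t, ht⟩
      omega
    have hmul1 : ∀ s ∈ S, 1 ≤ (p * q).rootMultiplicity s := by
      intro s hs
      exact (rootMultiplicity_pos hpq0).2 (hvanish s hs)
    have hub : ∑ s ∈ S, (p * q).rootMultiplicity s ≤ n + R.card := by
      have := mult_sum_le hpq0 S hvanish
      rwa [natDegree_mul hp0 hq0, hdeg, hqdeg] at this
    have hlb : 2 * S.card ≤ (∑ s ∈ S, (p * q).rootMultiplicity s) + 2 := by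
      have h1 : ∀ s ∈ S, 2 ≤ (p * q).rootMultiplicity s
          + (if s = a ∨ s = b then 1 else 0) := by
        intro s hs
        by_cases hcond : s = a ∨ s = b
        · rw [if_pos hcond]
          have := hmul1 s hs; omega
        · rw [if_neg hcond]
          push_neg at hcond
          exact hmul2 s hs hcond.1 hcond.2
      have h2 : ∑ s ∈ S, (if s = a ∨ s = b then (1:ℕ) else 0) ≤ 2 := by
        have he : ∑ s ∈ S, (if s = a ∨ s = b then (1:ℕ) else 0)
            = (S.filter (fun s => s = a ∨ s = b)).card := (Finset.card_filter _ _).symm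
        rw [he]
        have hsub : S.filter (fun s => s = a ∨ s = b) ⊆ {a, b} := by
          intro s hs
          rcases (Finset.mem_filter.mp hs).2 with h | h <;> simp [h]
        calc (S.filter (fun s => s = a ∨ s = b)).card ≤ ({a, b} : Finset ℝ).card :=
              Finset.card_le_card hsub
          _ ≤ 2 := Finset.card_insert_le a {b}
      calc 2 * S.card = ∑ _s ∈ S, 2 := by rw [Finset.sum_const, smul_eq_mul, mul_comm]
        _ ≤ ∑ s ∈ S, ((p * q).rootMultiplicity s + if s = a ∨ s = b then 1 else 0) :=
            Finset.sum_le_sum h1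
        _ = (∑ s ∈ S, (p * q).rootMultiplicity s)
            + ∑ s ∈ S, (if s = a ∨ s = b then 1 else 0) := Finset.sum_add_distrib
        _ ≤ (∑ s ∈ S, (p * q).rootMultiplicity s) + 2 := by omega
    omega
  exact ⟨R, hkeq, by rw [← ha, ← hb]; exact hRmem, hRroot⟩

lemma gauss_quadrature (S : Finset ℝ) (hS : S.Nonempty) (w : ℝ → ℝ)
    (hw : ∀ x ∈ S, 0 < w x) (n : ℕ) (hn : 1 ≤ n) (hcard : n + 1 ≤ S.card) :
    ∃ (x : Fin n → ℝ) (lam : Fin n → ℝ), StrictMono x ∧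
      (∀ i, x i ∈ Set.Icc (S.min' hS) (S.max' hS)) ∧ (∀ i, 0 < lam i) ∧
      ∀ q : Polynomial ℝ, q.natDegree < 2 * n →
        ∑ s ∈ S, w s * q.eval s = ∑ i, lam i * q.eval (x i) := by
  classical
  obtain ⟨p, hmonic, hdeg, horth⟩ := exists_orthopoly S w hw n (by omega)
  obtain ⟨R, hRcard, hRmem, hRroot⟩ := orthopoly_roots S hS w hw n hcard p hmonic hdeg horth
  let x : Fin n → ℝ := R.orderEmbOfFin hRcard
  have hxmono : StrictMono x := (R.orderEmbOfFin hRcard).strictMono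
  have hxmem : ∀ i, x i ∈ R := fun i => R.orderEmbOfFin_mem hRcard i
  have hxroot : ∀ i, p.eval (x i) = 0 := fun i => hRroot _ (hxmem i)
  have hinj : Set.InjOn x ↑(Finset.univ : Finset (Fin n)) :=
    fun i _ j _ hij => hxmono.injective hij
  have hcardu : (Finset.univ : Finset (Fin n)).card = n := by simp
  let ℓ : Fin n → Polynomial ℝ := fun i => Lagrange.basis Finset.univ x i
  let lam : Fin n → ℝ := fun i => ∑ s ∈ S, w s * (ℓ i).eval s
  have hℓdeg : ∀ i, (ℓ i).natDegree = n - 1 := by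
    intro i
    rw [show (ℓ i) = Lagrange.basis Finset.univ x i from rfl,
      Lagrange.natDegree_basis hinj (Finset.mem_univ i), hcardu]
  have hℓne : ∀ i, ℓ i ≠ 0 := fun i => Lagrange.basis_ne_zero hinj (Finset.mem_univ i)
  have hℓself : ∀ i, (ℓ i).eval (x i) = 1 := fun i =>
    Lagrange.eval_basis_self hinj (Finset.mem_univ i)
  have hℓne' : ∀ i j, i ≠ j → (ℓ i).eval (x j) = 0 := fun i j hij =>
    Lagrange.eval_basis_of_ne hij (Finset.mem_univ j)
  -- exactness
  have hexact : ∀ q : Polynomial ℝ, q.natDegree < 2 * n →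
      ∑ s ∈ S, w s * q.eval s = ∑ i, lam i * q.eval (x i) := by
    intro q hq
    have hp0 : p ≠ 0 := hmonic.ne_zero
    obtain ⟨r, hr⟩ : ∃ r, r = q %ₘ p := ⟨_, rfl⟩
    obtain ⟨g, hg⟩ : ∃ g, g = q /ₘ p := ⟨_, rfl⟩
    have hsplit : q = r + p * g := by rw [hr, hg, modByMonic_add_div q p]
    have hrdeg : r.degree < (n : WithBot ℕ) := by
      rw [hr]
      have := degree_modByMonic_lt q hmonic
      rwa [degree_eq_natDegree hp0, hdeg] at this
    have hgdeg : g.natDegree < n := by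
      rw [hg, natDegree_divByMonic q hmonic, hdeg]
      omega
    -- middle term vanishes
    have hmid : ∑ s ∈ S, w s * (p.eval s * g.eval s) = 0 := by
      have hgev : ∀ s : ℝ, g.eval s = ∑ j ∈ Finset.range n, g.coeff j * s ^ j := fun s =>
        eval_eq_sum_range' hgdeg s
      have hterm : ∀ s ∈ S, w s * (p.eval s * g.eval s)
          = ∑ j ∈ Finset.range n, g.coeff j * (w s * p.eval s * s ^ j) := by
        intro s _
        rw [hgev s, Finset.mul_sum, Finset.mul_sum]
        exact Finset.sum_congr rfl fun j _ => by ring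
      rw [Finset.sum_congr rfl hterm, Finset.sum_comm]
      apply Finset.sum_eq_zero
      intro j hj
      rw [← Finset.mul_sum, horth j (Finset.mem_range.mp hj), mul_zero]
    -- interpolation identity for r
    have hinterp : r = ∑ i, C (r.eval (x i)) * ℓ i := by
      have h6 := Lagrange.eq_interpolate hinj (f := r) (by rw [hcardu]; exact hrdeg)
      rw [Lagrange.interpolate_apply] at h6
      exact h6
    have hrsum : ∑ s ∈ S, w s * r.eval s = ∑ i, lam i * r.eval (x i) := by
      have hrev : ∀ s : ℝ, r.eval s = ∑ i, r.eval (x i) * (ℓ i).eval s := by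
        intro s
        conv_lhs => rw [hinterp]
        rw [eval_finset_sum]
        exact Finset.sum_congr rfl fun i _ => by rw [eval_mul, eval_C]
      have hterm : ∀ s ∈ S, w s * r.eval s
          = ∑ i, r.eval (x i) * (w s * (ℓ i).eval s) := by
        intro s _
        rw [hrev s, Finset.mul_sum]
        exact Finset.sum_congr rfl fun i _ => by ring
      rw [Finset.sum_congr rfl hterm, Finset.sum_comm]
      refine Finset.sum_congr rfl fun i _ => ?_
      rw [← Finset.mul_sum]
      rw [show lam i = ∑ s ∈ S, w s * (ℓ i).eval s from rfl]
      ring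
    have hqr : ∀ i, q.eval (x i) = r.eval (x i) := by
      intro i
      rw [hsplit, eval_add, eval_mul, hxroot i, zero_mul, add_zero]
    calc ∑ s ∈ S, w s * q.eval s
        = ∑ s ∈ S, (w s * r.eval s + w s * (p.eval s * g.eval s)) := by
          refine Finset.sum_congr rfl fun s _ => ?_
          rw [hsplit]; rw [eval_add, eval_mul]; ring
      _ = ∑ s ∈ S, w s * r.eval s + ∑ s ∈ S, w s * (p.eval s * g.eval s) :=
          Finset.sum_add_distrib
      _ = ∑ s ∈ S, w s * r.eval s := by rw [hmid, add_zero]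
      _ = ∑ i, lam i * r.eval (x i) := hrsum
      _ = ∑ i, lam i * q.eval (x i) := by
          exact Finset.sum_congr rfl fun i _ => by rw [hqr i]
  -- positivity of weights
  have hlampos : ∀ i, 0 < lam i := by
    intro i
    have hdeg2 : ((ℓ i) ^ 2).natDegree < 2 * n := by
      rw [natDegree_pow, hℓdeg i]
      omega
    have h1 := hexact ((ℓ i) ^ 2) hdeg2
    have h2 : ∑ j, lam j * ((ℓ i) ^ 2).eval (x j) = lam i := by
      rw [Finset.sum_eq_single i]
      · rw [eval_pow, hℓself i]; ring
      · intro j _ hji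
        rw [eval_pow, hℓne' i j (Ne.symm hji)]; ring
      · intro hi; exact absurd (Finset.mem_univ i) hi
    rw [h2] at h1
    rw [← h1]
    apply Finset.sum_pos'
    · intro s hs
      rw [eval_pow]
      have := (hw s hs).le
      positivity
    · -- there is s ∈ S with (ℓ i).eval s ≠ 0
      by_contra hcon
      push_neg at hcon
      have hvan : ∀ s ∈ S, (ℓ i).eval s = 0 := by
        intro s hs
        have h3 := hcon s hs
        rw [eval_pow] at h3
        have h4 : 0 ≤ w s * ((ℓ i).eval s) ^ 2 := by
          have := (hw s hs).le
          positivity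
        have h5 : w s * ((ℓ i).eval s) ^ 2 = 0 := le_antisymm h3 h4
        have := (mul_eq_zero.mp h5).resolve_left (hw s hs).ne'
        exact pow_eq_zero_iff (by norm_num) |>.mp this
      have hsub : S.val ⊆ (ℓ i).roots := by
        intro s hs
        rw [mem_roots (hℓne i)]
        exact hvan s hs
      have := card_le_degree_of_subset_roots hsub
      rw [hℓdeg i] at this
      omega
  exact ⟨x, lam, hxmono, fun i => hRmem _ (hxmem i), hlampos, hexact⟩

lemma radau_quadrature (S : Finset ℝ) (w : ℝ → ℝ) (hw : ∀ x ∈ S, 0 < w x)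
    (tmin tmax : ℝ) (hS : ∀ s ∈ S, s ∈ Set.Icc tmin tmax) (n : ℕ) (hn : 1 ≤ n)
    (hcard : n + 1 ≤ (S.erase tmin).card) :
    ∃ (x : Fin n → ℝ) (lam : Fin n → ℝ) (lam0 : ℝ), StrictMono x ∧
      (∀ i, x i ∈ Set.Ioc tmin tmax) ∧ (∀ i, 0 < lam i) ∧ 0 ≤ lam0 ∧
      ∀ q : Polynomial ℝ, q.natDegree ≤ 2 * n →
        ∑ s ∈ S, w s * q.eval s = lam0 * q.eval tmin + ∑ i, lam i * q.eval (x i) := by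
  classical
  obtain ⟨S', hS'⟩ : ∃ S', S' = S.erase tmin := ⟨_, rfl⟩
  have hS'card : n + 1 ≤ S'.card := hS' ▸ hcard
  have hS'ne : S'.Nonempty := Finset.card_pos.mp (by omega)
  have hS'mem : ∀ s ∈ S', s ∈ S ∧ tmin < s := by
    intro s hs
    rw [hS'] at hs
    have h1 := Finset.mem_of_mem_erase hs
    have h2 := Finset.ne_of_mem_erase hs
    exact ⟨h1, lt_of_le_of_ne (hS s h1).1 (Ne.symm h2)⟩
  obtain ⟨w', hw'⟩ : ∃ w' : ℝ → ℝ, w' = fun s => w s * (s - tmin) := ⟨_, rfl⟩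
  have hw'pos : ∀ s ∈ S', 0 < w' s := by
    intro s hs
    obtain ⟨h1, h2⟩ := hS'mem s hs
    rw [hw']
    exact mul_pos (hw s h1) (by linarith)
  obtain ⟨x, lam', hxmono, hxmem, hlam'pos, hexact'⟩ :=
    gauss_quadrature S' hS'ne w' hw'pos n hn hS'card
  have hxIoc : ∀ i, x i ∈ Set.Ioc tmin tmax := by
    intro i
    obtain ⟨h1, h2⟩ := hxmem i
    have hmin : tmin < S'.min' hS'ne := (hS'mem _ (S'.min'_mem hS'ne)).2
    have hmax : S'.max' hS'ne ≤ tmax := (hS (S'.max' hS'ne) (hS'mem _ (S'.max'_mem hS'ne)).1).2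
    exact ⟨lt_of_lt_of_le hmin h1, le_trans h2 hmax⟩
  have hxd : ∀ i, 0 < x i - tmin := fun i => by have := (hxIoc i).1; linarith
  obtain ⟨lam, hlam⟩ : ∃ lam : Fin n → ℝ, lam = fun i => lam' i / (x i - tmin) := ⟨_, rfl⟩
  have hlampos : ∀ i, 0 < lam i := fun i => by
    rw [hlam]; exact div_pos (hlam'pos i) (hxd i)
  obtain ⟨lam0, hlam0⟩ : ∃ lam0 : ℝ, lam0 = (∑ s ∈ S, w s) - ∑ i, lam i := ⟨_, rfl⟩
  -- exactness
  have hexact : ∀ q : Polynomial ℝ, q.natDegree ≤ 2 * n →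
      ∑ s ∈ S, w s * q.eval s = lam0 * q.eval tmin + ∑ i, lam i * q.eval (x i) := by
    intro q hq
    obtain ⟨g, hg⟩ : ∃ g, g = q /ₘ (X - C tmin) := ⟨_, rfl⟩
    have hsplit : q = (X - C tmin) * g + C (q.eval tmin) := by
      conv_lhs => rw [← modByMonic_add_div q (X - C tmin)]
      rw [modByMonic_X_sub_C_eq_C_eval, hg]
      ring
    have hgdeg : g.natDegree < 2 * n := by
      rw [hg, natDegree_divByMonic q (monic_X_sub_C tmin), natDegree_X_sub_C]
      omega
    have hqev : ∀ s : ℝ, q.eval s = (s - tmin) * g.eval s + q.eval tmin := by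
      intro s
      conv_lhs => rw [hsplit]
      simp
    have hstep1 : ∑ s ∈ S, w s * q.eval s
        = ∑ s ∈ S, w s * (s - tmin) * g.eval s + (∑ s ∈ S, w s) * q.eval tmin := by
      rw [Finset.sum_mul, ← Finset.sum_add_distrib]
      refine Finset.sum_congr rfl fun s _ => ?_
      rw [hqev s]; ring
    have hstep2 : ∑ s ∈ S, w s * (s - tmin) * g.eval s
        = ∑ s ∈ S', w' s * g.eval s := by
      have hz : w' tmin * Polynomial.eval tmin g = 0 := by rw [hw']; simp
      calc ∑ s ∈ S, w s * (s - tmin) * Polynomial.eval s g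
          = ∑ s ∈ S, w' s * Polynomial.eval s g :=
            Finset.sum_congr rfl fun s _ => by rw [hw']
        _ = ∑ s ∈ S.erase tmin, w' s * Polynomial.eval s g :=
            (Finset.sum_erase (f := fun s => w' s * Polynomial.eval s g) S hz).symm
        _ = ∑ s ∈ S', w' s * Polynomial.eval s g := by rw [hS']
    have hstep3 : ∑ s ∈ S', w' s * g.eval s = ∑ i, lam' i * g.eval (x i) :=
      hexact' g hgdeg
    have hstep4 : ∀ i, lam' i * g.eval (x i) = lam i * (q.eval (x i) - q.eval tmin) := by
      intro i
      have h1 := hqev (x i)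
      have h2 : x i - tmin ≠ 0 := (hxd i).ne'
      have h3 : q.eval (x i) - q.eval tmin = (x i - tmin) * g.eval (x i) := by rw [h1]; ring
      rw [hlam]
      simp only []
      rw [h3]
      field_simp
    calc ∑ s ∈ S, w s * q.eval s
        = ∑ s ∈ S, w s * (s - tmin) * g.eval s + (∑ s ∈ S, w s) * q.eval tmin := hstep1
      _ = (∑ i, lam' i * g.eval (x i)) + (∑ s ∈ S, w s) * q.eval tmin := by
          rw [hstep2, hstep3]
      _ = (∑ i, lam i * (q.eval (x i) - q.eval tmin)) + (∑ s ∈ S, w s) * q.eval tmin := by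
          rw [Finset.sum_congr rfl fun i _ => hstep4 i]
      _ = lam0 * q.eval tmin + ∑ i, lam i * q.eval (x i) := by
          have hsub : ∑ i, lam i * (q.eval (x i) - q.eval tmin)
              = (∑ i, lam i * q.eval (x i)) - (∑ i, lam i) * q.eval tmin := by
            rw [Finset.sum_mul, ← Finset.sum_sub_distrib]
            exact Finset.sum_congr rfl fun i _ => by ring
          rw [hsub, hlam0]; ring
  -- nonnegativity of the anchor weight
  have hlam0nn : 0 ≤ lam0 := by
    obtain ⟨q0, hq0⟩ : ∃ q0 : Polynomial ℝ, q0 = ∏ i : Fin n, (X - C (x i)) ^ 2 := ⟨_, rfl⟩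
    have hq0deg : q0.natDegree = 2 * n := by
      rw [hq0, natDegree_prod _ _ (fun i _ => pow_ne_zero _ (X_sub_C_ne_zero (x i)))]
      have he : ∀ i : Fin n, ((X - C (x i)) ^ 2).natDegree = 2 := fun i => by
        rw [natDegree_pow, natDegree_X_sub_C]
      rw [Finset.sum_congr rfl fun i _ => he i, Finset.sum_const, Finset.card_univ,
        Fintype.card_fin, smul_eq_mul, mul_comm]
    have hq0ev : ∀ s : ℝ, q0.eval s = ∏ i, (s - x i) ^ 2 := by
      intro s; rw [hq0, eval_prod]; exact Finset.prod_congr rfl fun i _ => by simp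
    have h1 := hexact q0 (le_of_eq hq0deg)
    have h2 : ∀ i, q0.eval (x i) = 0 := by
      intro i
      rw [hq0ev]
      apply Finset.prod_eq_zero (Finset.mem_univ i)
      simp
    have h3 : 0 < q0.eval tmin := by
      rw [hq0ev]
      apply Finset.prod_pos
      intro i _
      have h4 : (tmin - x i) ^ 2 = (x i - tmin) ^ 2 := by ring
      rw [h4]
      exact pow_pos (hxd i) 2
    have h4 : 0 ≤ ∑ s ∈ S, w s * q0.eval s := by
      apply Finset.sum_nonneg
      intro s hs
      apply mul_nonneg (hw s hs).le
      rw [hq0ev]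
      positivity
    rw [h1] at h4
    have h5 : ∑ i, lam i * q0.eval (x i) = 0 := by
      apply Finset.sum_eq_zero
      intro i _
      rw [h2 i, mul_zero]
    rw [h5, add_zero] at h4
    nlinarith
  exact ⟨x, lam, lam0, hxmono, hxIoc, hlampos, hlam0nn, hexact⟩

lemma sum_orderEmbOfFin (F : Finset ℝ) {m : ℕ} (h : F.card = m) (g : ℝ → ℝ) :
    ∑ j : Fin m, g (F.orderEmbOfFin h j) = ∑ s ∈ F, g s := by
  classical
  have himg : Finset.image (F.orderEmbOfFin h) Finset.univ = F := by
    apply Finset.coe_injective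
    rw [Finset.coe_image, Finset.coe_univ, Set.image_univ, range_orderEmbOfFin]
  conv_rhs => rw [← himg]
  rw [Finset.sum_image (fun i _ j _ hij => (F.orderEmbOfFin h).injective hij)]

lemma strictMono_fin_cases {n : ℕ} (a : ℝ) (x : Fin n → ℝ) (hx : StrictMono x)
    (ha : ∀ i, a < x i) : StrictMono (Fin.cases a x : Fin (n + 1) → ℝ) := by
  intro i j hij
  rcases Fin.eq_zero_or_eq_succ i with rfl | ⟨i', rfl⟩ <;>
    rcases Fin.eq_zero_or_eq_succ j with rfl | ⟨j', rfl⟩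
  · exact absurd hij (lt_irrefl _)
  · simpa using ha j'
  · exact absurd hij (Fin.not_lt_zero _)
  · have h1 : i' < j' := by
      rwa [Fin.succ_lt_succ_iff] at hij
    simpa using hx h1

/-- Extraction of a finitely supported probability measure from convex hull membership. -/
lemma measure_of_convexHull (N : ℕ) (tmin tmax : ℝ) (v : Fin N → ℝ)
    (hv : v ∈ convexHull ℝ ((fun t : ℝ => fun i : Fin N => t ^ ((i : ℕ) + 1)) ''
      Set.Icc tmin tmax)) :
    ∃ S : Finset ℝ, ∃ wf : ℝ → ℝ, (∀ s ∈ S, 0 < wf s) ∧ (∀ s ∈ S, s ∈ Set.Icc tmin tmax) ∧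
      (∑ s ∈ S, wf s = 1) ∧ ∀ i : Fin N, ∑ s ∈ S, wf s * s ^ ((i : ℕ) + 1) = v i := by
  classical
  rw [_root_.convexHull_eq] at hv
  obtain ⟨ι, T, w, z, hw0, hw1, hz, hcm⟩ := hv
  have hv' : ∀ i : Fin N, ∑ j ∈ T, w j * z j i = v i := by
    intro i
    rw [← hcm]
    rw [Finset.centerMass_eq_of_sum_1 _ _ hw1]
    simp [Finset.sum_apply]
  -- choose parameters
  have hτ : ∀ j ∈ T, ∃ τ ∈ Set.Icc tmin tmax, (fun i : Fin N => τ ^ ((i : ℕ) + 1)) = z j := by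
    intro j hj
    obtain ⟨τ, hτ1, hτ2⟩ := hz j hj
    exact ⟨τ, hτ1, hτ2⟩
  obtain ⟨τ, hτmem, hτeq⟩ : ∃ τ : ι → ℝ, (∀ j ∈ T, τ j ∈ Set.Icc tmin tmax) ∧
      (∀ j ∈ T, ∀ i : Fin N, (τ j) ^ ((i : ℕ) + 1) = z j i) := by
    choose f hf1 hf2 using hτ
    refine ⟨fun j => if hj : j ∈ T then f j hj else tmin, fun j hj => ?_, fun j hj i => ?_⟩
    · simp only [dif_pos hj]; exact hf1 j hj
    · simp only [dif_pos hj]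
      exact congrFun (hf2 j hj) i
  -- fiber weights
  obtain ⟨wf, hwf⟩ : ∃ wf : ℝ → ℝ, wf = fun s => ∑ j ∈ T.filter (fun j => τ j = s), w j :=
    ⟨_, rfl⟩
  have hwfnn : ∀ s, 0 ≤ wf s := by
    intro s; rw [hwf]
    exact Finset.sum_nonneg fun j hj => hw0 j (Finset.mem_filter.mp hj).1
  obtain ⟨S, hSdef⟩ : ∃ S, S = (T.image τ).filter (fun s => wf s ≠ 0) := ⟨_, rfl⟩
  have hkey : ∀ g : ℝ → ℝ, ∑ s ∈ S, wf s * g s = ∑ j ∈ T, w j * g (τ j) := by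
    intro g
    have h1 : ∑ s ∈ T.image τ, wf s * g s = ∑ j ∈ T, w j * g (τ j) := by
      apply Finset.sum_image'
      intro j hj
      rw [hwf]
      simp only []
      rw [Finset.sum_mul]
      refine Finset.sum_congr rfl fun j' hj' => ?_
      rw [(Finset.mem_filter.mp hj').2]
    rw [← h1, hSdef]
    rw [← Finset.sum_filter_add_sum_filter_not (T.image τ) (fun s => wf s ≠ 0)]
    have h2 : ∑ s ∈ (T.image τ).filter (fun s => ¬ wf s ≠ 0), wf s * g s = 0 := by
      apply Finset.sum_eq_zero
      intro s hs
      have := (Finset.mem_filter.mp hs).2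
      push_neg at this
      rw [this, zero_mul]
    rw [h2, add_zero]
  refine ⟨S, wf, ?_, ?_, ?_, ?_⟩
  · intro s hs
    rw [hSdef] at hs
    exact lt_of_le_of_ne (hwfnn s) (Ne.symm (Finset.mem_filter.mp hs).2)
  · intro s hs
    rw [hSdef] at hs
    obtain ⟨j, hj, hjs⟩ := Finset.mem_image.mp (Finset.mem_of_mem_filter s hs)
    exact hjs ▸ hτmem j hj
  · have h4 := hkey (fun _ => 1)
    simp only [mul_one] at h4
    exact h4.trans hw1
  · intro i
    have h3 := hkey (fun s => s ^ ((i : ℕ) + 1))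
    rw [h3, ← hv' i]
    refine Finset.sum_congr rfl fun j hj => ?_
    rw [hτeq j hj i]

/-- A non-reducible representation of `v` as a convex combination of points of the
moment curve: at most `(N+1)/2` points when `N` is odd; at most `(N+2)/2` points
with the first point anchored at `t_min` when `N` is even; parameters strictly
increasing in `[t_min, t_max]`; all coefficients strictly positive except possibly
the anchor's. -/
def NonReducibleRep (N : ℕ) (tmin tmax : ℝ) (v : Fin N → ℝ) (M' : ℕ)
    (c t : Fin M' → ℝ) : Prop :=
  (Odd N → M' ≤ (N + 1) / 2) ∧
  (Even N → M' ≤ (N + 2) / 2 ∧ ∃ h0 : 0 < M', t ⟨0, h0⟩ = tmin) ∧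
  (∀ j, 0 ≤ c j) ∧ (∑ j, c j = 1) ∧
  (∀ j, t j ∈ Set.Icc tmin tmax) ∧ StrictMono t ∧
  (∀ j : Fin M', (Even N → (j : ℕ) ≠ 0) → 0 < c j) ∧
  (∀ i : Fin N, ∑ j, c j * t j ^ ((i : ℕ) + 1) = v i)


lemma vandermonde_vanish (N : ℕ) (T : Finset ℝ) (hT : T.card ≤ N + 1) (d : ℝ → ℝ)
    (hd : ∀ k ≤ N, ∑ y ∈ T, d y * y ^ k = 0) : ∀ y ∈ T, d y = 0 := by
  classical
  intro y0 hy0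
  obtain ⟨ℓ, hℓ⟩ : ∃ ℓ, ℓ = Lagrange.basis T id y0 := ⟨_, rfl⟩
  have hinj : Set.InjOn (id : ℝ → ℝ) ↑T := Function.injective_id.injOn
  have hdeg : ℓ.natDegree < N + 1 := by
    rw [hℓ, Lagrange.natDegree_basis hinj hy0]
    omega
  have hself : ℓ.eval y0 = 1 := by
    rw [hℓ]
    exact Lagrange.eval_basis_self hinj hy0
  have hne : ∀ y ∈ T, y ≠ y0 → ℓ.eval y = 0 := by
    intro y hy hyne
    rw [hℓ]
    exact Lagrange.eval_basis_of_ne (v := id) (s := T) (Ne.symm hyne) hy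
  have h1 : ∑ y ∈ T, d y * ℓ.eval y = d y0 := by
    rw [Finset.sum_eq_single y0]
    · rw [hself, mul_one]
    · intro y hy hyne
      rw [hne y hy hyne, mul_zero]
    · intro h; exact absurd hy0 h
  have h2 : ∑ y ∈ T, d y * ℓ.eval y = 0 := by
    have hev : ∀ y : ℝ, ℓ.eval y = ∑ k ∈ Finset.range (N + 1), ℓ.coeff k * y ^ k := fun y =>
      eval_eq_sum_range' hdeg y
    have hterm : ∀ y ∈ T, d y * ℓ.eval y
        = ∑ k ∈ Finset.range (N + 1), ℓ.coeff k * (d y * y ^ k) := by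
      intro y _
      rw [hev y, Finset.mul_sum]
      exact Finset.sum_congr rfl fun k _ => by ring
    rw [Finset.sum_congr rfl hterm, Finset.sum_comm]
    apply Finset.sum_eq_zero
    intro k hk
    rw [← Finset.mul_sum, hd k (by rw [Finset.mem_range] at hk; omega), mul_zero]
  rw [h1] at h2; exact h2

lemma nonReducibleRep_unique (N : ℕ) (hN : 0 < N) (tmin tmax : ℝ) (v : Fin N → ℝ)
    {M₁ M₂ : ℕ} {c₁ t₁ : Fin M₁ → ℝ} {c₂ t₂ : Fin M₂ → ℝ}
    (h1 : NonReducibleRep N tmin tmax v M₁ c₁ t₁)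
    (h2 : NonReducibleRep N tmin tmax v M₂ c₂ t₂) :
    ∃ hMM : M₂ = M₁, ∀ j : Fin M₂,
      c₂ j = c₁ (Fin.cast hMM j) ∧ t₂ j = t₁ (Fin.cast hMM j) := by
  classical
  obtain ⟨hodd1, heven1, hc1nn, hc1sum, ht1mem, ht1mono, hc1pos, hmom1⟩ := h1
  obtain ⟨hodd2, heven2, hc2nn, hc2sum, ht2mem, ht2mono, hc2pos, hmom2⟩ := h2
  -- images
  obtain ⟨F₁, hF₁⟩ : ∃ F, F = Finset.image t₁ Finset.univ := ⟨_, rfl⟩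
  obtain ⟨F₂, hF₂⟩ : ∃ F, F = Finset.image t₂ Finset.univ := ⟨_, rfl⟩
  have hF₁card : F₁.card = M₁ := by
    rw [hF₁, Finset.card_image_of_injective _ ht1mono.injective, Finset.card_univ,
      Fintype.card_fin]
  have hF₂card : F₂.card = M₂ := by
    rw [hF₂, Finset.card_image_of_injective _ ht2mono.injective, Finset.card_univ,
      Fintype.card_fin]
  obtain ⟨T, hT⟩ : ∃ T, T = F₁ ∪ F₂ := ⟨_, rfl⟩
  -- fiber weights
  obtain ⟨cw₁, hcw₁⟩ : ∃ cw : ℝ → ℝ,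
      cw = fun y => ∑ j ∈ Finset.univ.filter (fun j => t₁ j = y), c₁ j := ⟨_, rfl⟩
  obtain ⟨cw₂, hcw₂⟩ : ∃ cw : ℝ → ℝ,
      cw = fun y => ∑ j ∈ Finset.univ.filter (fun j => t₂ j = y), c₂ j := ⟨_, rfl⟩
  have hkey₁ : ∀ g : ℝ → ℝ, ∑ y ∈ T, cw₁ y * g y = ∑ j, c₁ j * g (t₁ j) := by
    intro g
    have hmap : ∀ j : Fin M₁, j ∈ Finset.univ → t₁ j ∈ T := fun j _ => by
      rw [hT, hF₁]
      exact Finset.mem_union_left _ (Finset.mem_image_of_mem _ (Finset.mem_univ j))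
    have h0 := Finset.sum_fiberwise_of_maps_to hmap (fun j => c₁ j * g (t₁ j))
    rw [← h0]
    refine Finset.sum_congr rfl fun y _ => ?_
    rw [hcw₁]
    simp only []
    rw [Finset.sum_mul]
    refine Finset.sum_congr rfl fun j hj => ?_
    rw [(Finset.mem_filter.mp hj).2]
  have hkey₂ : ∀ g : ℝ → ℝ, ∑ y ∈ T, cw₂ y * g y = ∑ j, c₂ j * g (t₂ j) := by
    intro g
    have hmap : ∀ j : Fin M₂, j ∈ Finset.univ → t₂ j ∈ T := fun j _ => by
      rw [hT, hF₂]
      exact Finset.mem_union_right _ (Finset.mem_image_of_mem _ (Finset.mem_univ j))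
    have h0 := Finset.sum_fiberwise_of_maps_to hmap (fun j => c₂ j * g (t₂ j))
    rw [← h0]
    refine Finset.sum_congr rfl fun y _ => ?_
    rw [hcw₂]
    simp only []
    rw [Finset.sum_mul]
    refine Finset.sum_congr rfl fun j hj => ?_
    rw [(Finset.mem_filter.mp hj).2]
  -- cardinality bound
  have hTcard : T.card ≤ N + 1 := by
    rcases Nat.even_or_odd N with hEv | hOd
    · -- even case : tmin in both images
      obtain ⟨hM₁le, h01⟩ := heven1 hEv
      obtain ⟨hM₂le, h02⟩ := heven2 hEv
      obtain ⟨hpos1, htmin1⟩ := h01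
      obtain ⟨hpos2, htmin2⟩ := h02
      have hmem1 : tmin ∈ F₁ := by
        rw [hF₁, Finset.mem_image]
        exact ⟨⟨0, hpos1⟩, Finset.mem_univ _, htmin1⟩
      have hmem2 : tmin ∈ F₂ := by
        rw [hF₂, Finset.mem_image]
        exact ⟨⟨0, hpos2⟩, Finset.mem_univ _, htmin2⟩
      have hint : 1 ≤ (F₁ ∩ F₂).card := by
        apply Finset.card_pos.mpr
        exact ⟨tmin, Finset.mem_inter.mpr ⟨hmem1, hmem2⟩⟩
      have := Finset.card_union_add_card_inter F₁ F₂
      have hNe : N % 2 = 0 := Nat.even_iff.mp hEv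
      have hle1 : M₁ ≤ (N + 2) / 2 := hM₁le
      have hle2 : M₂ ≤ (N + 2) / 2 := hM₂le
      rw [hT]
      omega
    · have hle1 : M₁ ≤ (N + 1) / 2 := hodd1 hOd
      have hle2 : M₂ ≤ (N + 1) / 2 := hodd2 hOd
      have hNo : N % 2 = 1 := Nat.odd_iff.mp hOd
      have := Finset.card_union_le F₁ F₂
      rw [hT]
      omega
  -- moment equations for the difference
  have hmomdiff : ∀ k ≤ N, ∑ y ∈ T, (cw₁ y - cw₂ y) * y ^ k = 0 := by
    intro k hk
    have hsplit : ∑ y ∈ T, (cw₁ y - cw₂ y) * y ^ k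
        = ∑ y ∈ T, cw₁ y * y ^ k - ∑ y ∈ T, cw₂ y * y ^ k := by
      rw [← Finset.sum_sub_distrib]
      exact Finset.sum_congr rfl fun y _ => by ring
    rw [hsplit, hkey₁ (fun y => y ^ k), hkey₂ (fun y => y ^ k)]
    rcases Nat.eq_zero_or_pos k with rfl | hkpos
    · simp only [pow_zero, mul_one]
      rw [hc1sum, hc2sum, sub_self]
    · obtain ⟨i, hi⟩ : ∃ i : Fin N, (i : ℕ) + 1 = k := ⟨⟨k - 1, by omega⟩, by simp; omega⟩
      rw [show (fun j => c₁ j * t₁ j ^ k) = (fun j => c₁ j * t₁ j ^ ((i : ℕ) + 1)) by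
        funext j; rw [hi], hmom1 i]
      rw [show (fun j => c₂ j * t₂ j ^ k) = (fun j => c₂ j * t₂ j ^ ((i : ℕ) + 1)) by
        funext j; rw [hi], hmom2 i]
      rw [sub_self]
  have hcw_eq : ∀ y ∈ T, cw₁ y = cw₂ y := by
    intro y hy
    have h5 := vandermonde_vanish N T hTcard (fun y => cw₁ y - cw₂ y) hmomdiff y hy
    have h6 : cw₁ y - cw₂ y = 0 := h5
    linarith
  -- cw of own node
  have hcwt₁ : ∀ j, cw₁ (t₁ j) = c₁ j := by
    intro j
    have hfilter : Finset.univ.filter (fun j' => t₁ j' = t₁ j) = {j} := by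
      ext j'
      simp only [Finset.mem_filter, Finset.mem_univ, true_and, Finset.mem_singleton]
      exact ⟨fun h => ht1mono.injective h, fun h => by rw [h]⟩
    rw [hcw₁]
    simp only []
    rw [hfilter, Finset.sum_singleton]
  have hcwt₂ : ∀ j, cw₂ (t₂ j) = c₂ j := by
    intro j
    have hfilter : Finset.univ.filter (fun j' => t₂ j' = t₂ j) = {j} := by
      ext j'
      simp only [Finset.mem_filter, Finset.mem_univ, true_and, Finset.mem_singleton]
      exact ⟨fun h => ht2mono.injective h, fun h => by rw [h]⟩
    rw [hcw₂]
    simp only []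
    rw [hfilter, Finset.sum_singleton]
  -- image sets are equal
  have hmemT₁ : ∀ j, t₁ j ∈ T := fun j => by
    rw [hT, hF₁]; exact Finset.mem_union_left _ (Finset.mem_image_of_mem _ (Finset.mem_univ j))
  have hmemT₂ : ∀ j, t₂ j ∈ T := fun j => by
    rw [hT, hF₂]; exact Finset.mem_union_right _ (Finset.mem_image_of_mem _ (Finset.mem_univ j))
  have himg : F₁ = F₂ := by
    apply Finset.Subset.antisymm
    · intro y hy
      rw [hF₁] at hy
      obtain ⟨j, _, hjy⟩ := Finset.mem_image.mp hy
      by_cases hc : Even N ∧ (j : ℕ) = 0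
      · obtain ⟨hEv, hj0⟩ := hc
        obtain ⟨hM₂le, hpos2, htmin2⟩ := heven2 hEv
        obtain ⟨hM₁le, hpos1, htmin1⟩ := heven1 hEv
        have hjeq : j = ⟨0, hpos1⟩ := Fin.ext hj0
        have : y = tmin := by rw [← hjy, hjeq, htmin1]
        rw [hF₂, this, Finset.mem_image]
        exact ⟨⟨0, hpos2⟩, Finset.mem_univ _, htmin2⟩
      · have hcpos : 0 < c₁ j := by
          apply hc1pos j
          intro hEv
          intro hj0
          exact hc ⟨hEv, hj0⟩
        have hcw2pos : cw₂ y ≠ 0 := by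
          rw [← hcw_eq y (hjy ▸ hmemT₁ j), ← hjy, hcwt₁ j]
          exact hcpos.ne'
        have hfne : (Finset.univ.filter (fun j' => t₂ j' = y)).Nonempty := by
          by_contra hcon
          rw [Finset.not_nonempty_iff_eq_empty] at hcon
          apply hcw2pos
          rw [hcw₂]
          simp only []
          rw [hcon, Finset.sum_empty]
        obtain ⟨j', hj'⟩ := hfne
        rw [hF₂, Finset.mem_image]
        exact ⟨j', Finset.mem_univ _, (Finset.mem_filter.mp hj').2⟩
    · intro y hy
      rw [hF₂] at hy
      obtain ⟨j, _, hjy⟩ := Finset.mem_image.mp hy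
      by_cases hc : Even N ∧ (j : ℕ) = 0
      · obtain ⟨hEv, hj0⟩ := hc
        obtain ⟨hM₂le, hpos2, htmin2⟩ := heven2 hEv
        obtain ⟨hM₁le, hpos1, htmin1⟩ := heven1 hEv
        have hjeq : j = ⟨0, hpos2⟩ := Fin.ext hj0
        have : y = tmin := by rw [← hjy, hjeq, htmin2]
        rw [hF₁, this, Finset.mem_image]
        exact ⟨⟨0, hpos1⟩, Finset.mem_univ _, htmin1⟩
      · have hcpos : 0 < c₂ j := by
          apply hc2pos j
          intro hEv hj0
          exact hc ⟨hEv, hj0⟩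
        have hcw1pos : cw₁ y ≠ 0 := by
          rw [hcw_eq y (hjy ▸ hmemT₂ j), ← hjy, hcwt₂ j]
          exact hcpos.ne'
        have hfne : (Finset.univ.filter (fun j' => t₁ j' = y)).Nonempty := by
          by_contra hcon
          rw [Finset.not_nonempty_iff_eq_empty] at hcon
          apply hcw1pos
          rw [hcw₁]
          simp only []
          rw [hcon, Finset.sum_empty]
        obtain ⟨j', hj'⟩ := hfne
        rw [hF₁, Finset.mem_image]
        exact ⟨j', Finset.mem_univ _, (Finset.mem_filter.mp hj').2⟩
  have hMM : M₂ = M₁ := by rw [← hF₂card, ← himg, hF₁card]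
  subst hMM
  refine ⟨rfl, fun j => ?_⟩
  have ht1u : t₁ = F₁.orderEmbOfFin hF₁card := by
    apply Finset.orderEmbOfFin_unique hF₁card
    · intro j'
      rw [hF₁]
      exact Finset.mem_image_of_mem _ (Finset.mem_univ j')
    · exact ht1mono
  have ht2u : t₂ = F₁.orderEmbOfFin hF₁card := by
    apply Finset.orderEmbOfFin_unique hF₁card
    · intro j'
      rw [himg, hF₂]
      exact Finset.mem_image_of_mem _ (Finset.mem_univ j')
    · exact ht2mono
  have hteq : t₂ j = t₁ j := by rw [ht1u, ht2u]
  have hceq : c₂ j = c₁ j := by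
    rw [← hcwt₂ j, hteq, ← hcw_eq _ (hmemT₁ j), hcwt₁ j]
  exact ⟨hceq, hteq⟩

end MomentCurveAux

section MomentCurveExistence

/-- Existence of a non-reducible representation. -/
lemma exists_nonReducibleRep (N : ℕ) (hN : 0 < N) (tmin tmax : ℝ)
    (h : tmin < tmax) (v : Fin N → ℝ)
    (hv : v ∈ convexHull ℝ ((fun t : ℝ => fun i : Fin N => t ^ ((i : ℕ) + 1)) ''
      Set.Icc tmin tmax)) :
    ∃ (M' : ℕ) (c t : Fin M' → ℝ), NonReducibleRep N tmin tmax v M' c t := by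
  classical
  obtain ⟨S, wf, hwpos, hSmem, hmass, hmom⟩ := measure_of_convexHull N tmin tmax v hv
  have hSne : S.Nonempty := by
    rcases Finset.eq_empty_or_nonempty S with rfl | hne
    · exfalso; rw [Finset.sum_empty] at hmass; norm_num at hmass
    · exact hne
  have hminmem : S.min' hSne ∈ S := S.min'_mem hSne
  have hmaxmem : S.max' hSne ∈ S := S.max'_mem hSne
  rcases Nat.even_or_odd N with hNev | hNodd
  · -- Even case
    have hNmod : N % 2 = 0 := Nat.even_iff.mp hNev
    obtain ⟨n, hn2⟩ : ∃ n : ℕ, N = 2 * n := ⟨N / 2, by omega⟩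
    have hn1 : 1 ≤ n := by omega
    have hOddFalse : ∀ hOd : Odd N, False := fun hOd => by
      rw [Nat.odd_iff] at hOd; omega
    by_cases hbig : n + 1 ≤ (S.erase tmin).card
    · -- Radau quadrature
      obtain ⟨x, lam, lam0, hxmono, hxIoc, hlampos, hlam0nn, hexact⟩ :=
        radau_quadrature S wf hwpos tmin tmax hSmem n hn1 hbig
      refine ⟨n + 1, Fin.cases lam0 lam, Fin.cases tmin x, ?_, ?_, ?_, ?_, ?_, ?_, ?_, ?_⟩
      · intro hOd; exact absurd hOd (fun hOd => hOddFalse hOd)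
      · intro _
        refine ⟨by omega, Nat.succ_pos n, ?_⟩
        simp
      · intro j
        rcases Fin.eq_zero_or_eq_succ j with rfl | ⟨i, rfl⟩
        · simpa using hlam0nn
        · simpa using (hlampos i).le
      · have h1 := hexact 1 (by rw [natDegree_one]; omega)
        simp only [eval_one, mul_one] at h1
        rw [hmass] at h1
        simp only [Fin.sum_univ_succ, Fin.cases_zero, Fin.cases_succ]
        linarith
      · intro j
        rcases Fin.eq_zero_or_eq_succ j with rfl | ⟨i, rfl⟩
        · simp only [Fin.cases_zero]
          exact ⟨le_refl _, h.le⟩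
        · simp only [Fin.cases_succ]
          exact ⟨(hxIoc i).1.le, (hxIoc i).2⟩
      · exact strictMono_fin_cases tmin x hxmono (fun i => (hxIoc i).1)
      · intro j hj
        have hj0 : (j : ℕ) ≠ 0 := hj hNev
        rcases Fin.eq_zero_or_eq_succ j with rfl | ⟨i, rfl⟩
        · simp at hj0
        · simp only [Fin.cases_succ]
          exact hlampos i
      · intro i
        have hk := hexact (X ^ ((i : ℕ) + 1))
          (by rw [natDegree_X_pow]; omega)
        simp only [eval_pow, eval_X] at hk
        rw [hmom i] at hk
        simp only [Fin.sum_univ_succ, Fin.cases_zero, Fin.cases_succ]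
        linarith
    · -- small support : direct representation anchored at tmin
      push_neg at hbig
      obtain ⟨F, hFdef⟩ : ∃ F, F = insert tmin (S.erase tmin) := ⟨_, rfl⟩
      obtain ⟨W, hWdef⟩ : ∃ W : ℝ → ℝ, W = fun s => if s ∈ S then wf s else 0 := ⟨_, rfl⟩
      have htminF : tmin ∈ F := by rw [hFdef]; exact Finset.mem_insert_self _ _
      have hFmem : ∀ s ∈ F, s ∈ Set.Icc tmin tmax := by
        intro s hs
        rw [hFdef, Finset.mem_insert] at hs
        rcases hs with rfl | hs
        · exact ⟨le_refl _, h.le⟩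
        · exact hSmem s (Finset.mem_of_mem_erase hs)
      have hsumF : ∀ g : ℝ → ℝ, ∑ s ∈ F, W s * g s = ∑ s ∈ S, wf s * g s := by
        intro g
        by_cases htm : tmin ∈ S
        · have hFS : F = S := by rw [hFdef, Finset.insert_erase htm]
          rw [hFS]
          refine Finset.sum_congr rfl fun s hs => ?_
          rw [hWdef]; simp only []; rw [if_pos hs]
        · have hSS : S.erase tmin = S := Finset.erase_eq_of_notMem htm
          rw [hFdef, hSS, Finset.sum_insert htm]
          rw [hWdef]; simp only []
          rw [if_neg htm, zero_mul, zero_add]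
          refine Finset.sum_congr rfl fun s hs => ?_
          rw [if_pos hs]
      have hFcard : F.card ≤ n + 1 := by
        rw [hFdef]
        have := Finset.card_insert_le tmin (S.erase tmin)
        omega
      have hFpos : 0 < F.card := Finset.card_pos.mpr ⟨tmin, htminF⟩
      have hminF : F.min' ⟨tmin, htminF⟩ = tmin := by
        apply le_antisymm
        · exact Finset.min'_le F tmin htminF
        · apply Finset.le_min'
          intro s hs
          exact (hFmem s hs).1
      refine ⟨F.card, fun j => W (F.orderEmbOfFin rfl j), F.orderEmbOfFin rfl,
        ?_, ?_, ?_, ?_, ?_, ?_, ?_, ?_⟩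
      · intro hOd; exact absurd hOd (fun hOd => hOddFalse hOd)
      · intro _
        refine ⟨by omega, hFpos, ?_⟩
        rw [Finset.orderEmbOfFin_zero rfl hFpos]
        exact hminF
      · intro j
        rw [hWdef]
        simp only []
        by_cases hmem : F.orderEmbOfFin rfl j ∈ S
        · rw [if_pos hmem]; exact (hwpos _ hmem).le
        · rw [if_neg hmem]
      · have h1 := sum_orderEmbOfFin F rfl W
        have h2 := hsumF (fun _ => 1)
        simp only [mul_one] at h2
        rw [h1, h2, hmass]
      · intro j; exact hFmem _ (F.orderEmbOfFin_mem rfl j)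
      · exact (F.orderEmbOfFin rfl).strictMono
      · intro j hj
        have hj0 : (j : ℕ) ≠ 0 := hj hNev
        have hlt : (⟨0, hFpos⟩ : Fin F.card) < j := by
          rw [Fin.lt_def]; simp; omega
        have hgt : tmin < F.orderEmbOfFin rfl j := by
          have := (F.orderEmbOfFin rfl).strictMono hlt
          rwa [Finset.orderEmbOfFin_zero rfl hFpos, hminF] at this
        have hmemF : F.orderEmbOfFin rfl j ∈ F := F.orderEmbOfFin_mem rfl j
        have hmemS : F.orderEmbOfFin rfl j ∈ S := by
          have h9 : F.orderEmbOfFin rfl j ∈ insert tmin (S.erase tmin) := by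
            rw [← hFdef]; exact hmemF
          rcases Finset.mem_insert.mp h9 with heq | hmem
          · exact absurd heq hgt.ne'
          · exact Finset.mem_of_mem_erase hmem
        rw [hWdef]
        simp only []
        rw [if_pos hmemS]
        exact hwpos _ hmemS
      · intro i
        have h1 := sum_orderEmbOfFin F rfl (fun s => W s * s ^ ((i : ℕ) + 1))
        have h2 := hsumF (fun s => s ^ ((i : ℕ) + 1))
        exact h1.trans (h2.trans (hmom i))
  · -- Odd case
    have hNmod : N % 2 = 1 := Nat.odd_iff.mp hNodd
    obtain ⟨n, hn2⟩ : ∃ n : ℕ, N + 1 = 2 * n := ⟨(N + 1) / 2, by omega⟩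
    have hn1 : 1 ≤ n := by omega
    have hEvFalse : ∀ hEv : Even N, False := fun hEv => by
      rw [Nat.even_iff] at hEv; omega
    by_cases hbig : n + 1 ≤ S.card
    · -- Gauss quadrature
      obtain ⟨x, lam, hxmono, hxmem, hlampos, hexact⟩ :=
        gauss_quadrature S hSne wf hwpos n hn1 hbig
      have hxIcc : ∀ i, x i ∈ Set.Icc tmin tmax := by
        intro i
        obtain ⟨h1, h2⟩ := hxmem i
        exact ⟨le_trans (hSmem _ hminmem).1 h1, le_trans h2 (hSmem _ hmaxmem).2⟩
      refine ⟨n, lam, x, ?_, ?_, ?_, ?_, ?_, ?_, ?_, ?_⟩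
      · intro _; omega
      · intro hEv; exact absurd hEv (fun hEv => hEvFalse hEv)
      · intro j; exact (hlampos j).le
      · have h1 := hexact 1 (by rw [natDegree_one]; omega)
        simp only [eval_one, mul_one] at h1
        rw [hmass] at h1
        exact h1.symm
      · exact hxIcc
      · exact hxmono
      · intro j _; exact hlampos j
      · intro i
        have hk := hexact (X ^ ((i : ℕ) + 1))
          (by rw [natDegree_X_pow]; omega)
        simp only [eval_pow, eval_X] at hk
        rw [hmom i] at hk
        exact hk.symm
    · -- small support : direct representation
      push_neg at hbig
      refine ⟨S.card, fun j => wf (S.orderEmbOfFin rfl j), S.orderEmbOfFin rfl,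
        ?_, ?_, ?_, ?_, ?_, ?_, ?_, ?_⟩
      · intro _; omega
      · intro hEv; exact absurd hEv (fun hEv => hEvFalse hEv)
      · intro j; exact (hwpos _ (S.orderEmbOfFin_mem rfl j)).le
      · rw [sum_orderEmbOfFin S rfl wf, hmass]
      · intro j; exact hSmem _ (S.orderEmbOfFin_mem rfl j)
      · exact (S.orderEmbOfFin rfl).strictMono
      · intro j _; exact hwpos _ (S.orderEmbOfFin_mem rfl j)
      · intro i
        have h1 := sum_orderEmbOfFin S rfl (fun s => wf s * s ^ ((i : ℕ) + 1))
        exact h1.trans (hmom i)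

end MomentCurveExistence

/-- Every point of the convex hull of the moment curve has exactly one
non-reducible representation. -/
theorem existsUnique_nonReducibleRep (N : ℕ) (hN : 0 < N) (tmin tmax : ℝ)
    (h : tmin < tmax) (v : Fin N → ℝ)
    (hv : v ∈ convexHull ℝ ((fun t : ℝ => fun i : Fin N => t ^ ((i : ℕ) + 1)) ''
      Set.Icc tmin tmax)) :
    ∃ (M' : ℕ) (c t : Fin M' → ℝ), NonReducibleRep N tmin tmax v M' c t ∧
      ∀ (M'' : ℕ) (c' t' : Fin M'' → ℝ), NonReducibleRep N tmin tmax v M'' c' t' →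
        ∃ hMM : M'' = M', ∀ j : Fin M'',
          c' j = c (Fin.cast hMM j) ∧ t' j = t (Fin.cast hMM j) := by
  obtain ⟨M', c, t, hrep⟩ := exists_nonReducibleRep N hN tmin tmax h v hv
  exact ⟨M', c, t, hrep, fun M'' c' t' hrep' =>
    nonReducibleRep_unique N hN tmin tmax v hrep hrep'⟩
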